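/- arXiv:1005.5575 — 2 statements merged into one kernel-verified Lean document; each statement's English description precedes it below -/
import Mathlib

section
/- For any essentially bounded measurable function f on X, the essential supremum (with respect to the product measure μ^N restricted to the set C of N-tuples forming (𝓜, μ)-uniform point sets) of the integration error |(1/N)·∑_{n=1}^N f(x_n) − ∫_X f dμ| is at most 2·D(f, L_𝓜), where D(f, L_𝓜) = inf_{l ∈ L_𝓜} ‖f − l‖_∞. -/
/-!
Every `l ∈ L_𝓜` is integrated exactly by an `(𝓜, μ)`-uniform point set, so on `C` the
integration error of `f` equals that of `f - l`. For `μ^N`-almost every tuple each `|(f - l)(x_n)|`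
is at most `‖f - l‖_∞`, and so is `|∫ (f - l) dμ|`, which bounds that error by `2 ‖f - l‖_∞`.
Since the infimum over `L_𝓜` is approached along a sequence, countably many null sets suffice
to pass to `D(f, L_𝓜)`.
-/

open MeasureTheory Filter

theorem Filter.eventually_le_biInf {α ι β : Type*} {l : Filter α} [CountableInterFilter l]
    [CompleteLinearOrder β] [TopologicalSpace β] [OrderTopology β] [FirstCountableTopology β]
    {F : α → β} {g : ι → β} {S : Set ι} (h : ∀ i ∈ S, ∀ᶠ a in l, F a ≤ g i) :
    ∀ᶠ a in l, F a ≤ ⨅ i ∈ S, g i := by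
  rcases S.eq_empty_or_nonempty with rfl | hS
  · simp
  obtain ⟨u, -, hu, hmem⟩ := exists_seq_tendsto_sInf (hS.image g) (OrderBot.bddBelow _)
  choose i hiS hi using hmem
  have hF : ∀ᶠ a in l, ∀ n, F a ≤ u n := eventually_countable_forall.2 fun n => hi n ▸ h _ (hiS n)
  filter_upwards [hF] with a ha
  rw [← sInf_image]
  exact ge_of_tendsto' hu ha

namespace QuasiMonteCarlo

variable {X : Type*} [MeasurableSpace X]

def indicatorSpan (𝓜 : Set (Set X)) : Submodule ℝ (X → ℝ) :=
  Submodule.span ℝ (insert (fun _ => (1 : ℝ))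
    {g : X → ℝ | ∃ M ∈ 𝓜, g = Set.indicator M (fun _ => (1 : ℝ))})

def IsUniform (μ : Measure X) (𝓜 : Set (Set X)) {N : ℕ} (x : Fin N → X) : Prop :=
  ∀ M ∈ 𝓜, ∑ n : Fin N, Set.indicator M (fun _ => (1 : ℝ)) (x n) = (μ M).toReal * N

noncomputable def integrationError (μ : Measure X) (f : X → ℝ) {N : ℕ} (x : Fin N → X) : ℝ :=
  (1 / (N : ℝ)) * ∑ n : Fin N, f (x n) - ∫ t, f t ∂μ

variable {μ : Measure X} {𝓜 : Set (Set X)} {N : ℕ}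

theorem measurableSet_setOf_isUniform (h𝓜c : 𝓜.Countable) (h𝓜 : ∀ M ∈ 𝓜, MeasurableSet M) :
    MeasurableSet {x : Fin N → X | IsUniform μ 𝓜 x} := by
  simp only [IsUniform, Set.ofPred_forall]
  refine MeasurableSet.biInter h𝓜c fun M hM => measurableSet_eq_fun ?_ measurable_const
  exact Finset.measurable_sum _ fun n _ =>
    (measurable_const.indicator (h𝓜 M hM)).comp (measurable_pi_apply n)

theorem integrable_of_mem_indicatorSpan [IsFiniteMeasure μ] (h𝓜 : ∀ M ∈ 𝓜, MeasurableSet M)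
    {l : X → ℝ} (hl : l ∈ indicatorSpan 𝓜) : Integrable l μ := by
  induction hl using Submodule.span_induction with
  | mem g hg =>
    rcases hg with rfl | ⟨M, hM, rfl⟩
    · exact integrable_const 1
    · exact (integrable_const 1).indicator (h𝓜 M hM)
  | zero => exact integrable_zero _ _ _
  | add a b _ _ ha hb => exact ha.add hb
  | smul c a _ ha => exact ha.smul c

theorem sum_eq_mul_integral_of_mem_indicatorSpan [IsProbabilityMeasure μ]
    (h𝓜 : ∀ M ∈ 𝓜, MeasurableSet M) {x : Fin N → X} (hx : IsUniform μ 𝓜 x)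
    {l : X → ℝ} (hl : l ∈ indicatorSpan 𝓜) : ∑ n, l (x n) = N * ∫ t, l t ∂μ := by
  induction hl using Submodule.span_induction with
  | mem g hg =>
    rcases hg with rfl | ⟨M, hM, rfl⟩
    · simp
    · rw [hx M hM, integral_indicator_const _ (h𝓜 M hM)]
      simp [mul_comm, Measure.real]
  | zero => simp
  | add a b ha hb iha ihb =>
    simp only [Pi.add_apply]
    rw [integral_add (integrable_of_mem_indicatorSpan h𝓜 ha)
      (integrable_of_mem_indicatorSpan h𝓜 hb)]
    simp only [Finset.sum_add_distrib, iha, ihb]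
    ring
  | smul c a _ iha =>
    simp only [Pi.smul_apply, smul_eq_mul, ← Finset.mul_sum, iha, integral_const_mul]
    ring

theorem integrationError_sub_of_mem_indicatorSpan [IsProbabilityMeasure μ] (hN : 0 < N)
    (h𝓜 : ∀ M ∈ 𝓜, MeasurableSet M) {x : Fin N → X} (hx : IsUniform μ 𝓜 x)
    {f : X → ℝ} (hf : Integrable f μ) {l : X → ℝ} (hl : l ∈ indicatorSpan 𝓜) :
    integrationError μ (f - l) x = integrationError μ f x := by
  have hl_sum := sum_eq_mul_integral_of_mem_indicatorSpan h𝓜 hx hl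
  simp only [integrationError, Pi.sub_apply, Finset.sum_sub_distrib, hl_sum,
    integral_sub hf (integrable_of_mem_indicatorSpan h𝓜 hl)]
  field_simp
  ring

theorem enorm_integral_le_eLpNormEssSup [IsProbabilityMeasure μ] (g : X → ℝ) :
    ‖∫ t, g t ∂μ‖ₑ ≤ eLpNormEssSup g μ :=
  calc ‖∫ t, g t ∂μ‖ₑ ≤ ∫⁻ t, ‖g t‖ₑ ∂μ := enorm_integral_le_lintegral_enorm g
    _ ≤ ∫⁻ _, eLpNormEssSup g μ ∂μ := lintegral_mono_ae ae_le_eLpNormEssSup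
    _ = eLpNormEssSup g μ := by simp

theorem enorm_integrationError_le {g : X → ℝ} {x : Fin N → X} (hN : 0 < N) {B : ENNReal}
    (hx : ∀ n, ‖g (x n)‖ₑ ≤ B) (hint : ‖∫ t, g t ∂μ‖ₑ ≤ B) :
    ‖integrationError μ g x‖ₑ ≤ 2 * B := by
  have hN0 : (N : ENNReal) ≠ 0 := by exact_mod_cast hN.ne'
  calc ‖integrationError μ g x‖ₑ
      ≤ (N : ENNReal)⁻¹ * ‖∑ n, g (x n)‖ₑ + ‖∫ t, g t ∂μ‖ₑ := by
        refine (enorm_sub_le).trans_eq ?_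
        rw [enorm_mul, one_div, enorm_inv (by exact_mod_cast hN.ne'), Real.enorm_natCast]
    _ ≤ (N : ENNReal)⁻¹ * (N * B) + B := by
        gcongr
        calc ‖∑ n, g (x n)‖ₑ ≤ ∑ n, ‖g (x n)‖ₑ := enorm_sum_le _ _
          _ ≤ ∑ _n : Fin N, B := Finset.sum_le_sum fun n _ => hx n
          _ = N * B := by simp
    _ = 2 * B := by rw [ENNReal.inv_mul_cancel_left hN0 (ENNReal.natCast_ne_top N), two_mul]

theorem ae_enorm_integrationError_le [IsProbabilityMeasure μ] (hN : 0 < N) (g : X → ℝ) :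
    ∀ᵐ x ∂(Measure.pi fun _ : Fin N => μ), ‖integrationError μ g x‖ₑ ≤ 2 * eLpNorm g ⊤ μ := by
  have hx : ∀ᵐ x ∂(Measure.pi fun _ : Fin N => μ), ∀ n, ‖g (x n)‖ₑ ≤ eLpNormEssSup g μ :=
    ae_all_iff.2 fun n =>
      (Measure.tendsto_eval_ae_ae (μ := fun _ : Fin N => μ) (i := n)).eventually
        ae_le_eLpNormEssSup
  filter_upwards [hx] with x hx
  rw [eLpNorm_exponent_top]
  exact enorm_integrationError_le hN hx (enorm_integral_le_eLpNormEssSup g)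

end QuasiMonteCarlo

open QuasiMonteCarlo

theorem quasiMonteCarlo_error_le_two_dist_general
    {X : Type*} [MeasurableSpace X] (μ : Measure X) [IsProbabilityMeasure μ]
    (𝓜 : Set (Set X)) (h𝓜c : 𝓜.Countable)
    (h𝓜 : ∀ M ∈ 𝓜, MeasurableSet M)
    (N : ℕ) (hN : 0 < N)
    (C : Set (Fin N → X))
    (hC : C = {x : Fin N → X | ∀ M ∈ 𝓜,
      ∑ n : Fin N, Set.indicator M (fun _ => (1 : ℝ)) (x n) = (μ M).toReal * N})
    (f : X → ℝ) (hf : MemLp f ⊤ μ) :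
    ∀ᵐ x ∂((Measure.pi (fun _ : Fin N => μ)).restrict C),
      ENNReal.ofReal |(1 / (N : ℝ)) * ∑ n : Fin N, f (x n) - ∫ t, f t ∂μ|
        ≤ 2 * ⨅ l ∈ Submodule.span ℝ
            (insert (fun _ => (1 : ℝ))
              {g : X → ℝ | ∃ M ∈ 𝓜, g = Set.indicator M (fun _ => (1 : ℝ))}),
            eLpNorm (f - l) ⊤ μ := by
  subst hC
  have hbound : ∀ l ∈ indicatorSpan 𝓜, ∀ᵐ x ∂((Measure.pi fun _ : Fin N => μ).restrict
      {x | IsUniform μ 𝓜 x}), ‖integrationError μ f x‖ₑ ≤ 2 * eLpNorm (f - l) ⊤ μ := by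
    intro l hl
    filter_upwards [ae_restrict_mem (measurableSet_setOf_isUniform h𝓜c h𝓜),
      ae_restrict_of_ae (ae_enorm_integrationError_le hN (f - l))] with x hx hl_err
    rwa [← integrationError_sub_of_mem_indicatorSpan hN h𝓜 hx (hf.integrable le_top) hl]
  filter_upwards [Filter.eventually_le_biInf hbound] with x hx
  simp_rw [← Real.enorm_eq_ofReal_abs, ENNReal.mul_iInf_of_ne two_ne_zero ENNReal.ofNat_ne_top]
  exact hx

/-- Theorem 1 of the paper: For f ∈ L^∞, the essential supremum over the set C
of (𝓜, μ)-uniform tuples (w.r.t. the product measure restricted to C) of the integration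
error is at most 2 · D(f, L_𝓜), stated as the a.e. bound
|error| ≤ 2 · inf_{l ∈ L_𝓜} ‖f − l‖_∞. -/
theorem quasiMonteCarlo_error_le_two_dist
    {X : Type*} [MeasurableSpace X] (μ : Measure X) [IsProbabilityMeasure μ]
    (𝓜 : Set (Set X)) (h𝓜ne : 𝓜.Nonempty) (h𝓜c : 𝓜.Countable)
    (h𝓜 : ∀ M ∈ 𝓜, MeasurableSet M)
    (N : ℕ) (hN : 0 < N)
    (C : Set (Fin N → X))
    (hC : C = {x : Fin N → X | ∀ M ∈ 𝓜,
      ∑ n : Fin N, Set.indicator M (fun _ => (1 : ℝ)) (x n) = (μ M).toReal * N})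
    (f : X → ℝ) (hf : MemLp f ⊤ μ) :
    ∀ᵐ x ∂((Measure.pi (fun _ : Fin N => μ)).restrict C),
      ENNReal.ofReal |(1 / (N : ℝ)) * ∑ n : Fin N, f (x n) - ∫ t, f t ∂μ|
        ≤ 2 * ⨅ l ∈ Submodule.span ℝ
            (insert (fun _ => (1 : ℝ))
              {g : X → ℝ | ∃ M ∈ 𝓜, g = Set.indicator M (fun _ => (1 : ℝ))}),
            eLpNorm (f - l) ⊤ μ :=
  quasiMonteCarlo_error_le_two_dist_general μ 𝓜 h𝓜c h𝓜 N hN C hC f hf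
end

section
/- Let f be essentially bounded and measurable on X, and for each j let C_j = (G_j(f) + g_j(f))/2 and l = ∑_{j=1}^k C_j·χ_{M_j}. Then ‖f − l‖_∞ ≤ (1/2)·max_{1≤j≤k}(G_j(f) − g_j(f)), and hence D(f, L_𝓜) ≤ (1/2)·S_𝓜(f). -/
open MeasureTheory

/-- `Gj μ f M` is the essential upper bound `G_j(f)` of `f` on `M`:
`-inf_{x∈M} f⁻` if `f⁺ = 0` μ-a.e. on `M`, and `esssup_{M} f⁺` otherwise. -/
noncomputable def Gj {X : Type*} [MeasurableSpace X] (μ : Measure X)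
    (f : X → ℝ) (M : Set X) : ℝ :=
  if μ {x | x ∈ M ∧ 0 < max (f x) 0} = 0 then
    -(sInf ((fun x => max (-(f x)) 0) '' M))
  else essSup (fun x => max (f x) 0) (μ.restrict M)

/-- `gj μ f M` is the essential lower bound `g_j(f)` of `f` on `M`:
`inf_{x∈M} f⁺` if `f⁻ = 0` μ-a.e. on `M`, and `-esssup_{M} f⁻` otherwise. -/
noncomputable def gj {X : Type*} [MeasurableSpace X] (μ : Measure X)
    (f : X → ℝ) (M : Set X) : ℝ :=
  if μ {x | x ∈ M ∧ 0 < max (-(f x)) 0} = 0 then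
    sInf ((fun x => max (f x) 0) '' M)
  else -(essSup (fun x => max (-(f x)) 0) (μ.restrict M))

/-! On each cell `M j` the function `f` lies a.e. between `gj` and `Gj`: if `f⁺` vanishes a.e.
on the cell, then `f = -f⁻ ≤ -inf f⁻` a.e. there, and otherwise `Gj` is the essential supremum of
`f⁺`, which dominates `f`; the lower bound is the mirror image, since `gj μ f = -Gj μ (-f)`.
So the midpoint of `[gj, Gj]` is within half the spread of `f` a.e. on the cell, and `l`, being
constant on each cell, lies in `L_𝓜`. -/

open Filter

section PieceBounds

variable {X : Type*} [MeasurableSpace X] {μ : Measure X} {f : X → ℝ} {M : Set X}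

lemma gj_eq_neg_Gj_neg : gj μ f M = -Gj μ (-f) M := by
  simp only [gj, Gj, Pi.neg_apply, neg_neg]
  split_ifs <;> simp

lemma ae_le_Gj (hM : MeasurableSet M) (hf : IsBoundedUnder (· ≤ ·) (ae μ) f) :
    ∀ᵐ x ∂μ, x ∈ M → f x ≤ Gj μ f M := by
  unfold Gj
  split_ifs with hpos
  · have hnonpos : ∀ᵐ x ∂μ, x ∈ M → f x ≤ 0 := by
      rw [ae_iff]
      simpa using hpos
    filter_upwards [hnonpos] with x hx hxM
    have hbdd : BddBelow ((fun x => max (-(f x)) 0) '' M) :=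
      ⟨0, by rintro _ ⟨y, -, rfl⟩; exact le_max_right _ _⟩
    have : sInf ((fun x => max (-(f x)) 0) '' M) ≤ -f x :=
      (csInf_le hbdd ⟨x, hxM, rfl⟩).trans_eq (max_eq_left (by linarith [hx hxM]))
    linarith
  · have hbdd : IsBoundedUnder (· ≤ ·) (ae (μ.restrict M)) fun x => max (f x) 0 :=
      (hf.mono ae_restrict_le).sup isBoundedUnder_const
    have hle := ae_le_essSup hbdd
    rw [ae_restrict_iff' hM] at hle
    filter_upwards [hle] with x hx hxM
    exact (le_max_left _ _).trans (hx hxM)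

lemma ae_gj_le (hM : MeasurableSet M) (hf : IsBoundedUnder (· ≥ ·) (ae μ) f) :
    ∀ᵐ x ∂μ, x ∈ M → gj μ f M ≤ f x := by
  have hneg : IsBoundedUnder (· ≤ ·) (ae μ) (-f) := isBoundedUnder_le_neg.mpr hf
  filter_upwards [ae_le_Gj hM hneg] with x hx hxM
  rw [gj_eq_neg_Gj_neg]
  linarith [hx hxM, show (-f) x = -f x from rfl]

lemma ae_abs_sub_midpoint_le (hM : MeasurableSet M)
    (hf : IsBoundedUnder (· ≤ ·) (ae μ) fun x => |f x|) :
    ∀ᵐ x ∂μ, x ∈ M → |f x - (Gj μ f M + gj μ f M) / 2| ≤ (Gj μ f M - gj μ f M) / 2 := by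
  obtain ⟨hle, hge⟩ := isBoundedUnder_le_abs.mp hf
  filter_upwards [ae_le_Gj hM hle, ae_gj_le hM hge] with x hG hg hxM
  rw [abs_le]
  constructor <;> linarith [hG hxM, hg hxM]

end PieceBounds

lemma MeasureTheory.MemLp.isBoundedUnder_abs {X : Type*} [MeasurableSpace X] {μ : Measure X}
    {f : X → ℝ} (hf : MemLp f ⊤ μ) : IsBoundedUnder (· ≤ ·) (ae μ) fun x => |f x| := by
  obtain ⟨C, hC⟩ := (eLpNormEssSup_lt_top_iff_isBoundedUnder (f := f) (μ := μ)).mp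
    (eLpNorm_exponent_top (f := f) ▸ hf.2)
  refine ⟨C, eventually_map.mpr ?_⟩
  filter_upwards [eventually_map.mp hC] with x hx
  simpa [← NNReal.coe_le_coe] using hx

section Partition

variable {X ι : Type*} [Fintype ι] {M : ι → Set X}

lemma sum_mul_indicator_apply_of_mem (hM : Pairwise (Function.onFun Disjoint M)) (c : ι → ℝ)
    {x : X} {i : ι} (hx : x ∈ M i) :
    ∑ j, c j * (M j).indicator (fun _ => (1 : ℝ)) x = c i := by
  rw [Finset.sum_eq_single i]
  · simp [hx]
  · intro j _ hji
    simp [Set.indicator_of_notMem ((hM hji).notMem_of_mem_right hx)]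
  · simp

lemma sum_mul_indicator_mem_span (c : ι → ℝ) :
    (fun x => ∑ j, c j * (M j).indicator (fun _ => (1 : ℝ)) x) ∈
      Submodule.span ℝ {g : X → ℝ | ∃ j, g = (M j).indicator fun _ => 1} := by
  have : (fun x => ∑ j, c j * (M j).indicator (fun _ => (1 : ℝ)) x) =
      ∑ j, c j • (M j).indicator fun _ => (1 : ℝ) := by
    ext x
    simp [Finset.sum_apply]
  rw [this]
  exact Submodule.sum_mem _ fun j _ => Submodule.smul_mem _ _ (Submodule.subset_span ⟨j, rfl⟩)

end Partition

theorem dist_le_half_spread_general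
    {X : Type*} [MeasurableSpace X] (μ : Measure X)
    (k : ℕ) (M : Fin k → Set X)
    (hMmeas : ∀ j, MeasurableSet (M j))
    (hMdisj : Pairwise (Function.onFun Disjoint M))
    (hMcover : ⋃ j, M j = Set.univ)
    (f : X → ℝ) (hf : MemLp f ⊤ μ)
    (l : X → ℝ)
    (hl : l = fun x => ∑ j : Fin k,
      ((Gj μ f (M j) + gj μ f (M j)) / 2) *
        Set.indicator (M j) (fun _ => (1 : ℝ)) x) :
    eLpNorm (f - l) ⊤ μ
        ≤ ENNReal.ofReal ((1 / 2) * ⨆ j : Fin k, (Gj μ f (M j) - gj μ f (M j)))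
    ∧ (⨅ l' ∈ Submodule.span ℝ
          (insert (fun _ => (1 : ℝ))
            {g : X → ℝ | ∃ j : Fin k, g = Set.indicator (M j) (fun _ => (1 : ℝ))}),
        eLpNorm (f - l') ⊤ μ)
        ≤ ENNReal.ofReal ((1 / 2) * ⨆ j : Fin k, (Gj μ f (M j) - gj μ f (M j))) := by
  have hpieces : ∀ᵐ x ∂μ, ∀ j, x ∈ M j →
      |f x - (Gj μ f (M j) + gj μ f (M j)) / 2| ≤ (Gj μ f (M j) - gj μ f (M j)) / 2 :=
    ae_all_iff.mpr fun j => ae_abs_sub_midpoint_le (hMmeas j) hf.isBoundedUnder_abs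
  have hnorm : eLpNorm (f - l) ⊤ μ
      ≤ ENNReal.ofReal ((1 / 2) * ⨆ j : Fin k, (Gj μ f (M j) - gj μ f (M j))) := by
    rw [eLpNorm_exponent_top]
    refine eLpNormEssSup_le_of_ae_bound ?_
    filter_upwards [hpieces] with x hx
    obtain ⟨j, hj⟩ := Set.mem_iUnion.mp (hMcover ▸ Set.mem_univ x)
    simp only [Pi.sub_apply, hl, sum_mul_indicator_apply_of_mem hMdisj _ hj, Real.norm_eq_abs]
    calc _ ≤ (Gj μ f (M j) - gj μ f (M j)) / 2 := hx j hj
      _ ≤ _ := by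
        rw [one_div_mul_eq_div]
        gcongr
        exact le_ciSup (Set.finite_range fun i => Gj μ f (M i) - gj μ f (M i)).bddAbove j
  have hl_mem : l ∈ Submodule.span ℝ (insert (fun _ => (1 : ℝ))
      {g : X → ℝ | ∃ j : Fin k, g = Set.indicator (M j) (fun _ => (1 : ℝ))}) :=
    hl ▸ Submodule.span_mono (Set.subset_insert _ _) (sum_mul_indicator_mem_span _)
  exact ⟨hnorm, (iInf₂_le l hl_mem).trans hnorm⟩

/-- With `C_j = (G_j(f)+g_j(f))/2` and `l = ∑_j C_j χ_{M_j}`, one has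
`‖f − l‖_∞ ≤ (1/2)·max_j (G_j(f) − g_j(f))`, hence `D(f, L_𝓜) ≤ (1/2)·S_𝓜(f)`. -/
theorem dist_le_half_spread
    {X : Type*} [MeasurableSpace X] (μ : Measure X) [IsProbabilityMeasure μ]
    (k : ℕ) (hk : 0 < k) (M : Fin k → Set X)
    (hMmeas : ∀ j, MeasurableSet (M j))
    (hMdisj : Pairwise (Function.onFun Disjoint M))
    (hMcover : ⋃ j, M j = Set.univ)
    (f : X → ℝ) (hf : MemLp f ⊤ μ)
    (l : X → ℝ)
    (hl : l = fun x => ∑ j : Fin k,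
      ((Gj μ f (M j) + gj μ f (M j)) / 2) *
        Set.indicator (M j) (fun _ => (1 : ℝ)) x) :
    eLpNorm (f - l) ⊤ μ
        ≤ ENNReal.ofReal ((1 / 2) * ⨆ j : Fin k, (Gj μ f (M j) - gj μ f (M j)))
    ∧ (⨅ l' ∈ Submodule.span ℝ
          (insert (fun _ => (1 : ℝ))
            {g : X → ℝ | ∃ j : Fin k, g = Set.indicator (M j) (fun _ => (1 : ℝ))}),
        eLpNorm (f - l') ⊤ μ)
        ≤ ENNReal.ofReal ((1 / 2) * ⨆ j : Fin k, (Gj μ f (M j) - gj μ f (M j))) :=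
  dist_le_half_spread_general μ k M hMmeas hMdisj hMcover f hf l hl
end
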